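/- For every integer k ≥ 1, with α_k = arcsin(1/(2(2k+1)^2)) and r_k = (√2/(4k))·(1 - (2k+1)·tan α_k), the following chain of strict inequalities holds: 2·k·r_k < √2/2 < √2/(2·cos α_k) < (2k+1)·r_k. -/

import Mathlib

/-!
Write `n = 2k + 1`, `s = sin α = 1 / (2n²)` and `c = cos α = √(1 - s²)`. The first two
inequalities only use `tan α > 0` and `c < 1`. Clearing denominators, the third one is
equivalent to `n c - n² s > n - 1`, i.e. (as `n² s = 1/2`) to `c > 1 - 1/(2n)`; squaring, this
is `1/n - 1/(4n²) > 1/(4n⁴)`, which holds for all `n ≥ 1`.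
-/

open Real

lemma Real.cos_arcsin_pos {s : ℝ} (hs₀ : -1 < s) (hs₁ : s < 1) : 0 < cos (arcsin s) := by
  rw [cos_arcsin]
  exact sqrt_pos.2 (by nlinarith)

lemma Real.cos_arcsin_lt_one {s : ℝ} (hs : 0 < s) : cos (arcsin s) < 1 := by
  rw [cos_arcsin, sqrt_lt' one_pos]
  nlinarith

lemma Real.tan_arcsin_pos {s : ℝ} (hs₀ : 0 < s) (hs₁ : s < 1) : 0 < tan (arcsin s) := by
  rw [tan_arcsin]
  exact div_pos hs₀ (sqrt_pos.2 (by nlinarith))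

lemma Real.one_sub_inv_lt_cos_arcsin {n : ℝ} (hn : 1 ≤ n) :
    1 - 1 / (2 * n) < cos (arcsin (1 / (2 * n ^ 2))) := by
  have hn₀ : 0 < n := by linarith
  rw [cos_arcsin]
  refine (lt_sqrt ?_).2 ?_
  · rw [sub_nonneg, div_le_one (by positivity)]
    linarith
  · rw [← sub_pos]
    have key : 1 - (1 / (2 * n ^ 2)) ^ 2 - (1 - 1 / (2 * n)) ^ 2
        = (4 * n ^ 3 - n ^ 2 - 1) / (4 * n ^ 4) := by
      field_simp
      ring
    rw [key]
    apply div_pos _ (by positivity)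
    nlinarith

lemma one_div_two_mul_sq_lt_one {n : ℝ} (hn : 1 ≤ n) : 1 / (2 * n ^ 2) < 1 := by
  rw [div_lt_one (by positivity)]
  nlinarith

section

variable {k : ℝ} (hk : 0 < k)
include hk

lemma two_mul_mul_one_sub_lt {t : ℝ} (ht : 0 < t) :
    2 * k * (√2 / (4 * k) * (1 - (2 * k + 1) * t)) < √2 / 2 := by
  have : 2 * k * (√2 / (4 * k) * (1 - (2 * k + 1) * t)) = √2 / 2 - √2 / 2 * ((2 * k + 1) * t) := by
    field_simp
    ring
  rw [this]
  linarith [show 0 < √2 / 2 * ((2 * k + 1) * t) by positivity]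

lemma sqrt_two_div_two_mul_cos_lt {α : ℝ} (hα : α = arcsin (1 / (2 * (2 * k + 1) ^ 2))) :
    √2 / (2 * cos α) < (2 * k + 1) * (√2 / (4 * k) * (1 - (2 * k + 1) * tan α)) := by
  set n := 2 * k + 1
  set s := 1 / (2 * n ^ 2) with hs
  have hn₀ : 0 < n := by positivity
  have hs₀ : 0 < s := by positivity
  have hs₁ : s < 1 := one_div_two_mul_sq_lt_one (by linarith)
  have hcos : 0 < cos α := hα ▸ cos_arcsin_pos (by linarith) hs₁
  have hsin : sin α = s := hα ▸ sin_arcsin (by linarith) hs₁.le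
  have key : n * (√2 / (4 * k) * (1 - n * tan α)) - √2 / (2 * cos α)
      = √2 * (n * cos α - n ^ 2 * s - 2 * k) / (4 * k * cos α) := by
    rw [tan_eq_sin_div_cos, hsin]
    field_simp
    ring
  have hns : n ^ 2 * s = 1 / 2 := by rw [hs]; field_simp
  have hnum : 2 * k < n * cos α - n ^ 2 * s := by
    have := mul_lt_mul_of_pos_left (hα ▸ one_sub_inv_lt_cos_arcsin (n := n) (by linarith)) hn₀
    rw [mul_one_sub, mul_one_div, div_mul_cancel_right₀ hn₀.ne'] at this
    linarith
  rw [← sub_pos, key]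
  apply div_pos _ (by positivity)
  nlinarith [sqrt_pos.2 (two_pos : (0 : ℝ) < 2)]

end

/-- For every integer k ≥ 1, with α_k = arcsin(1/(2(2k+1)²)) and
r_k = (√2/(4k))(1 - (2k+1)·tan α_k), one has
2·k·r_k < √2/2 < √2/(2·cos α_k) < (2k+1)·r_k. -/
theorem stmt_5 (k : ℕ) (hk : 1 ≤ k) (α r : ℝ)
    (hα : α = Real.arcsin (1 / (2 * (2 * (k : ℝ) + 1) ^ 2)))
    (hr : r = (Real.sqrt 2 / (4 * (k : ℝ))) * (1 - (2 * (k : ℝ) + 1) * Real.tan α)) :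
    2 * (k : ℝ) * r < Real.sqrt 2 / 2 ∧
    Real.sqrt 2 / 2 < Real.sqrt 2 / (2 * Real.cos α) ∧
    Real.sqrt 2 / (2 * Real.cos α) < (2 * (k : ℝ) + 1) * r := by
  have hk₀ : (0 : ℝ) < k := by exact_mod_cast hk
  set s : ℝ := 1 / (2 * (2 * (k : ℝ) + 1) ^ 2)
  have hs₀ : 0 < s := by positivity
  have hs₁ : s < 1 := one_div_two_mul_sq_lt_one (by linarith)
  have hcos₀ : 0 < cos α := hα ▸ cos_arcsin_pos (by linarith) hs₁
  have hcos₁ : cos α < 1 := hα ▸ cos_arcsin_lt_one hs₀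
  subst hr
  exact ⟨two_mul_mul_one_sub_lt hk₀ (hα ▸ tan_arcsin_pos hs₀ hs₁),
    div_lt_div_of_pos_left (by positivity) (by positivity) (by linarith),
    sqrt_two_div_two_mul_cos_lt hk₀ hα⟩
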